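/- Let y, z, c ∈ ℝ_{≥0}^T with y − z ≤ δ·c coordinatewise for some 0 < δ < 1, and let f be monotone convex with gradient bound as in Lemma 'conjugateabc'. If c = ∇f(x̄), then f*(y − z) ≤ f*(δ∇f(x̄)) ≤ δ^{q/(q−1)}(q−1)f(x̄). -/

import Mathlib

/-!
Put `l = δ ^ (1 / (q - 1))`, so that `l ^ (q - 1) = δ` and `l ^ q = δ ^ (q / (q - 1))`.
Integrating `⟨∇f(x), x⟩ ≤ q f(x)` along rays shows that `t ↦ t ^ (-q) f(t v)` is antitone, hence
`l ^ q f(w) ≤ f(l w)`; substituting `w ↦ l w` in the supremum defining `f*` then gives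
`f*(l ^ (q - 1) c) ≤ l ^ q f*(c)`. The gradient inequality of the convex `f` at `x̄` gives
`f*(∇f(x̄)) ≤ ⟨∇f(x̄), x̄⟩ - f(x̄) ≤ (q - 1) f(x̄)`, and `f*` is monotone.
-/

open Finset

noncomputable def fenchelStar {T : ℕ} (f : (Fin T → ℝ) → ℝ) (y : Fin T → ℝ) : EReal :=
  ⨆ w ∈ {w : Fin T → ℝ | 0 ≤ w}, ((∑ i, w i * y i - f w : ℝ) : EReal)

theorem ConvexOn.add_le_of_hasDerivAt_line {E : Type*} [AddCommGroup E] [Module ℝ E]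
    {s : Set E} {f : E → ℝ} (hf : ConvexOn ℝ s f) {a b : E} (ha : a ∈ s) (hb : b ∈ s) {d : ℝ}
    (hd : HasDerivAt (fun t : ℝ => f (a + t • (b - a))) d 0) :
    f a + d ≤ f b := by
  set line : ℝ →ᵃ[ℝ] E := AffineMap.lineMap a b
  have hline : ConvexOn ℝ (line ⁻¹' s) (f ∘ line) := hf.comp_affineMap line
  have hd' : HasDerivAt (f ∘ line) d 0 := by
    convert hd using 2 with t
    simp [line, AffineMap.lineMap_apply_module', add_comm]
  have hslope := hline.le_slope_of_hasDerivAt (x := 0) (y := 1) (by simpa [line])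
    (by simpa [line]) one_pos hd'
  simp only [slope_def_field, line, Function.comp_apply, AffineMap.lineMap_apply_one,
    AffineMap.lineMap_apply_zero, sub_zero, div_one] at hslope
  linarith

theorem antitoneOn_mul_rpow_neg_of_hasDerivAt {φ φ' : ℝ → ℝ} {q : ℝ}
    (hφ : ∀ t, 0 < t → HasDerivAt φ (φ' t) t) (hgrowth : ∀ t, 0 < t → t * φ' t ≤ q * φ t) :
    AntitoneOn (fun t => φ t * t ^ (-q)) (Set.Ioi 0) := by
  have hderiv : ∀ t, 0 < t → HasDerivAt (fun t => φ t * t ^ (-q))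
      (φ' t * t ^ (-q) + φ t * (-q * t ^ (-q - 1))) t := fun t ht =>
    (hφ t ht).mul (Real.hasDerivAt_rpow_const (Or.inl ht.ne'))
  refine antitoneOn_of_hasDerivWithinAt_nonpos (convex_Ioi 0)
    (fun t ht => (hderiv t ht).continuousAt.continuousWithinAt)
    (fun t ht => (hderiv t (interior_subset ht)).hasDerivWithinAt) fun t ht => ?_
  have ht : 0 < t := interior_subset ht
  have hfactor : φ' t * t ^ (-q) + φ t * (-q * t ^ (-q - 1))
      = (t * φ' t - q * φ t) * (t ^ (-q) / t) := by
    rw [Real.rpow_sub_one ht.ne']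
    field_simp
    ring
  rw [hfactor]
  exact mul_nonpos_of_nonpos_of_nonneg (by linarith [hgrowth t ht]) (by positivity)

theorem rpow_mul_le_apply_smul {ι : Type*} [Fintype ι] {f : (ι → ℝ) → ℝ}
    {g : (ι → ℝ) → ι → ℝ} {q : ℝ}
    (hdiff : ∀ x v : ι → ℝ, HasDerivAt (fun t : ℝ => f (x + t • v)) (∑ i, g x i * v i) 0)
    (hgrowth : ∀ x, 0 ≤ x → ∑ i, g x i * x i ≤ q * f x)
    {v : ι → ℝ} (hv : 0 ≤ v) {l : ℝ} (hl0 : 0 < l) (hl1 : l ≤ 1) :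
    l ^ q * f v ≤ f (l • v) := by
  have hray : ∀ t : ℝ, HasDerivAt (fun s : ℝ => f (s • v)) (∑ i, g (t • v) i * v i) t := by
    intro t
    have h := hdiff (t • v) v
    rw [← sub_self t] at h
    replace h := h.comp_sub_const
    have hshift : (fun s : ℝ => f (t • v + (s - t) • v)) = fun s => f (s • v) := by
      funext s
      rw [← add_smul, add_sub_cancel]
    rwa [hshift] at h
  have hanti := antitoneOn_mul_rpow_neg_of_hasDerivAt (fun t _ => hray t) fun t ht => by
    calc t * ∑ i, g (t • v) i * v i = ∑ i, g (t • v) i * (t • v) i := by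
          rw [mul_sum]
          exact sum_congr rfl fun i _ => by simp only [Pi.smul_apply, smul_eq_mul]; ring
      _ ≤ q * f (t • v) := hgrowth _ (smul_nonneg ht.le hv)
  have h := hanti hl0 (Set.mem_Ioi.2 one_pos) hl1
  simp only [one_smul, Real.one_rpow, mul_one, Real.rpow_neg hl0.le] at h
  rwa [← div_eq_mul_inv, le_div_iff₀ (by positivity), mul_comm] at h

section FenchelStar

variable {T : ℕ} {f : (Fin T → ℝ) → ℝ}

theorem fenchelStar_le_coe_iff {y : Fin T → ℝ} {B : ℝ} :
    fenchelStar f y ≤ B ↔ ∀ w, 0 ≤ w → ∑ i, w i * y i - f w ≤ B := by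
  simp only [fenchelStar, iSup₂_le_iff, Set.mem_ofPred_eq, EReal.coe_le_coe_iff]

theorem fenchelStar_mono {c c' : Fin T → ℝ} (h : c ≤ c') :
    fenchelStar f c ≤ fenchelStar f c' :=
  iSup₂_mono fun _ hw => EReal.coe_le_coe <|
    sub_le_sub_right (sum_le_sum fun i _ => mul_le_mul_of_nonneg_left (h i) (hw i)) _

variable {g : (Fin T → ℝ) → (Fin T → ℝ)} {q : ℝ}

theorem fenchelStar_grad_le
    (hdiff : ∀ x v : Fin T → ℝ, HasDerivAt (fun t : ℝ => f (x + t • v)) (∑ i, g x i * v i) 0)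
    (hgrowth : ∀ x, 0 ≤ x → ∑ i, g x i * x i ≤ q * f x)
    (hconv : ConvexOn ℝ {w : Fin T → ℝ | 0 ≤ w} f)
    {x : Fin T → ℝ} (hx : 0 ≤ x) :
    fenchelStar f (g x) ≤ ((q - 1) * f x : ℝ) := by
  refine fenchelStar_le_coe_iff.2 fun w hw => ?_
  have hgrad := hconv.add_le_of_hasDerivAt_line hx hw (hdiff x (w - x))
  have hsplit : ∑ i, g x i * (w - x) i = ∑ i, w i * g x i - ∑ i, g x i * x i := by
    rw [← sum_sub_distrib]
    exact sum_congr rfl fun i _ => by simp only [Pi.sub_apply]; ring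
  linarith [hgrowth x hx]

theorem fenchelStar_rpow_smul_le
    (hdiff : ∀ x v : Fin T → ℝ, HasDerivAt (fun t : ℝ => f (x + t • v)) (∑ i, g x i * v i) 0)
    (hgrowth : ∀ x, 0 ≤ x → ∑ i, g x i * x i ≤ q * f x) {l : ℝ} (hl0 : 0 < l) (hl1 : l ≤ 1)
    {c : Fin T → ℝ} {B : ℝ} (hB : fenchelStar f c ≤ B) :
    fenchelStar f (l ^ (q - 1) • c) ≤ (l ^ q * B : ℝ) := by
  refine fenchelStar_le_coe_iff.2 fun lw hlw => ?_
  obtain ⟨w, hw, rfl⟩ : ∃ w : Fin T → ℝ, 0 ≤ w ∧ lw = l • w :=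
    ⟨l⁻¹ • lw, smul_nonneg (inv_nonneg.2 hl0.le) hlw, by rw [smul_inv_smul₀ hl0.ne']⟩
  have hpow : l * l ^ (q - 1) = l ^ q := by
    rw [Real.rpow_sub_one hl0.ne']
    field_simp
  have hpair : ∑ i, (l • w) i * (l ^ (q - 1) • c) i = l ^ q * ∑ i, w i * c i := by
    rw [mul_sum, ← hpow]
    exact sum_congr rfl fun i _ => by simp only [Pi.smul_apply, smul_eq_mul]; ring
  have hscale := rpow_mul_le_apply_smul hdiff hgrowth hw hl0 hl1
  calc ∑ i, (l • w) i * (l ^ (q - 1) • c) i - f (l • w)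
      ≤ l ^ q * ∑ i, w i * c i - l ^ q * f w := by rw [hpair]; linarith
    _ = l ^ q * (∑ i, w i * c i - f w) := by ring
    _ ≤ l ^ q * B := by gcongr; exact fenchelStar_le_coe_iff.1 hB w hw

end FenchelStar

theorem conjugate_dual_constraint_bound_general {T : ℕ} (f : (Fin T → ℝ) → ℝ)
    (g : (Fin T → ℝ) → (Fin T → ℝ)) (q : ℝ) (hq : 1 < q)
    (hconv : ConvexOn ℝ {w : Fin T → ℝ | 0 ≤ w} f)
    (hdiff : ∀ x v : Fin T → ℝ, HasDerivAt (fun t : ℝ => f (x + t • v)) (∑ i, g x i * v i) 0)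
    (hgrowth : ∀ x, 0 ≤ x → ∑ i, g x i * x i ≤ q * f x)
    (δ : ℝ) (hδ0 : 0 < δ) (hδ1 : δ < 1)
    (y z xbar : Fin T → ℝ) (hxbar : 0 ≤ xbar)
    (hle : y - z ≤ δ • g xbar) :
    fenchelStar f (y - z) ≤ ((δ ^ (q / (q - 1)) * (q - 1) * f xbar : ℝ) : EReal) := by
  have hq1 : 0 < q - 1 := sub_pos.2 hq
  set l := δ ^ (1 / (q - 1))
  have hl0 : 0 < l := by positivity
  have hl1 : l ≤ 1 := Real.rpow_le_one hδ0.le hδ1.le (by positivity)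
  have hlδ : l ^ (q - 1) = δ := by
    rw [← Real.rpow_mul hδ0.le, one_div_mul_cancel hq1.ne', Real.rpow_one]
  have hlq : l ^ q = δ ^ (q / (q - 1)) := by
    rw [← Real.rpow_mul hδ0.le, one_div_mul_eq_div]
  calc fenchelStar f (y - z) ≤ fenchelStar f (l ^ (q - 1) • g xbar) :=
        fenchelStar_mono (hlδ ▸ hle)
    _ ≤ ((l ^ q * ((q - 1) * f xbar) : ℝ) : EReal) :=
        fenchelStar_rpow_smul_le hdiff hgrowth hl0 hl1
          (fenchelStar_grad_le hdiff hgrowth hconv hxbar)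
    _ = _ := by rw [hlq, mul_assoc]

theorem conjugate_dual_constraint_bound {T : ℕ} (f : (Fin T → ℝ) → ℝ)
    (g : (Fin T → ℝ) → (Fin T → ℝ)) (q : ℝ) (hq : 1 < q)
    (hnonneg : ∀ x, 0 ≤ x → 0 ≤ f x)
    (hmono : ∀ x y : Fin T → ℝ, 0 ≤ x → x ≤ y → f x ≤ f y)
    (hconv : ConvexOn ℝ {w : Fin T → ℝ | 0 ≤ w} f)
    (hdiff : ∀ x v : Fin T → ℝ, HasDerivAt (fun t : ℝ => f (x + t • v)) (∑ i, g x i * v i) 0)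
    (hf0 : f 0 = 0)
    (hgrowth : ∀ x, 0 ≤ x → ∑ i, g x i * x i ≤ q * f x)
    (δ : ℝ) (hδ0 : 0 < δ) (hδ1 : δ < 1)
    (y z xbar : Fin T → ℝ) (hy : 0 ≤ y) (hz : 0 ≤ z) (hxbar : 0 ≤ xbar)
    (hyz : 0 ≤ y - z) (hle : y - z ≤ δ • g xbar) :
    fenchelStar f (y - z) ≤ ((δ ^ (q / (q - 1)) * (q - 1) * f xbar : ℝ) : EReal) :=
  conjugate_dual_constraint_bound_general f g q hq hconv hdiff hgrowth δ hδ0 hδ1 y z xbar hxbar hle
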